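/- arXiv:1809.04224 — 2 statements merged into one kernel-verified Lean document; each statement's English description precedes it below -/
import Mathlib

section
/- Let p, q, q' be real numbers with 0 < p < 1/2 and 1 - p ≤ q' < q ≤ 1. Then U_s(p,q') < U_s(p,q) and FPR_s(p,q') < FPR_s(p,q) (U_s and FPR_s are strictly increasing in q on [1-p, 1]), while U_r(p,q) < U_r(p,q'), FPR_r(p,q) < FPR_r(p,q'), FNR_r(p,q) < FNR_r(p,q'), and FNR_s(p,q) < FNR_s(p,q') (U_r, FPR_r, FNR_r, and FNR_s are strictly decreasing in q on [1-p, 1]). -/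
/-- The revealing school's expected utility. -/
noncomputable def U_r (p q : ℝ) : ℝ := p * q + (1 - p) * (1 - q)

/-- The strategic school's expected utility. -/
noncomputable def U_s (p q : ℝ) : ℝ := 1 + (p + q - 2 * p * q) * (2 * p - 1) / (q - p)

/-- The revealing school's false positive rate. -/
noncomputable def FPR_r (p q : ℝ) : ℝ := 1 - q

/-- The revealing school's false negative rate. -/
noncomputable def FNR_r (p q : ℝ) : ℝ := 1 - q

/-- The strategic school's false positive rate. -/
noncomputable def FPR_s (p q : ℝ) : ℝ := 1 - q + q * (p + q - 1) / (q - p)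

/-- The strategic school's false negative rate. -/
noncomputable def FNR_s (p q : ℝ) : ℝ := (1 - q) * (1 - 2 * p) / (q - p)


/-!
Each strategic quantity is affine in `1 / (q - p)`: `U_s` and `FPR_s` with the negative
coefficients `-2p(1 - p)(1 - 2p)` and `-p(1 - 2p)`, `FNR_s` with the positive coefficient
`(1 - p)(1 - 2p)`. So on `q > p`, which contains `[1 - p, 1]` because `p < 1/2`, the first two
increase and the last decreases. The revealing quantities are affine in `q` with negative slope.
-/

open Set

theorem strictAntiOn_div_sub {c : ℝ} (hc : 0 < c) (p : ℝ) :
    StrictAntiOn (fun q => c / (q - p)) (Ioi p) := fun _ hx _ _ hxy =>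
  div_lt_div_of_pos_left hc (sub_pos.2 hx) (sub_lt_sub_right hxy p)

section

variable {p q : ℝ}

theorem U_s_eq (hqp : q ≠ p) :
    U_s p q = 1 - (1 - 2 * p) ^ 2 - 2 * p * (1 - p) * (1 - 2 * p) / (q - p) := by
  have : q - p ≠ 0 := sub_ne_zero.2 hqp
  rw [U_s]
  field_simp
  ring

theorem FPR_s_eq (hqp : q ≠ p) : FPR_s p q = 2 * p - p * (1 - 2 * p) / (q - p) := by
  have : q - p ≠ 0 := sub_ne_zero.2 hqp
  rw [FPR_s]
  field_simp
  ring

theorem FNR_s_eq (hqp : q ≠ p) : FNR_s p q = (1 - p) * (1 - 2 * p) / (q - p) - (1 - 2 * p) := by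
  have : q - p ≠ 0 := sub_ne_zero.2 hqp
  rw [FNR_s]
  field_simp
  ring

theorem U_r_eq : U_r p q = 1 - p - (1 - 2 * p) * q := by
  rw [U_r]
  ring

end

section

variable {p : ℝ}

theorem U_s_strictMonoOn (hp0 : 0 < p) (hp : p < 1 / 2) : StrictMonoOn (U_s p) (Ioi p) := by
  intro x hx y hy hxy
  have hc : 0 < 2 * p * (1 - p) * (1 - 2 * p) :=
    mul_pos (mul_pos (mul_pos two_pos hp0) (by linarith)) (by linarith)
  have h : 2 * p * (1 - p) * (1 - 2 * p) / (y - p) < 2 * p * (1 - p) * (1 - 2 * p) / (x - p) :=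
    strictAntiOn_div_sub hc p hx hy hxy
  rw [U_s_eq (ne_of_gt hx), U_s_eq (ne_of_gt hy)]
  linarith

theorem FPR_s_strictMonoOn (hp0 : 0 < p) (hp : p < 1 / 2) : StrictMonoOn (FPR_s p) (Ioi p) := by
  intro x hx y hy hxy
  have h : p * (1 - 2 * p) / (y - p) < p * (1 - 2 * p) / (x - p) :=
    strictAntiOn_div_sub (mul_pos hp0 (by linarith)) p hx hy hxy
  rw [FPR_s_eq (ne_of_gt hx), FPR_s_eq (ne_of_gt hy)]
  linarith

theorem FNR_s_strictAntiOn (hp : p < 1 / 2) : StrictAntiOn (FNR_s p) (Ioi p) := by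
  intro x hx y hy hxy
  have h : (1 - p) * (1 - 2 * p) / (y - p) < (1 - p) * (1 - 2 * p) / (x - p) :=
    strictAntiOn_div_sub (mul_pos (by linarith) (by linarith)) p hx hy hxy
  rw [FNR_s_eq (ne_of_gt hx), FNR_s_eq (ne_of_gt hy)]
  linarith

theorem U_r_strictAnti (hp : p < 1 / 2) : StrictAnti (U_r p) := by
  intro x y hxy
  have h : (1 - 2 * p) * x < (1 - 2 * p) * y := mul_lt_mul_of_pos_left hxy (by linarith)
  rw [U_r_eq, U_r_eq]
  linarith

theorem FPR_r_strictAnti : StrictAnti (FPR_r p) := fun _ _ hxy => sub_lt_sub_left hxy 1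

theorem FNR_r_strictAnti : StrictAnti (FNR_r p) := fun _ _ hxy => sub_lt_sub_left hxy 1

end

theorem monotonicity_in_grade_accuracy_general (p q q' : ℝ) (hp0 : 0 < p) (hp : p < 1/2)
    (hq'1 : 1 - p ≤ q') (hq' : q' < q) :
    U_s p q' < U_s p q ∧ FPR_s p q' < FPR_s p q ∧
    U_r p q < U_r p q' ∧ FPR_r p q < FPR_r p q' ∧
    FNR_r p q < FNR_r p q' ∧ FNR_s p q < FNR_s p q' := by
  have hq'p : q' ∈ Ioi p := show p < q' by linarith
  have hqp : q ∈ Ioi p := show p < q by linarith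
  exact ⟨U_s_strictMonoOn hp0 hp hq'p hqp hq', FPR_s_strictMonoOn hp0 hp hq'p hqp hq',
    U_r_strictAnti hp hq', FPR_r_strictAnti hq', FNR_r_strictAnti hq',
    FNR_s_strictAntiOn hp hq'p hqp hq'⟩

/-- Monotonicity results: U_s and FPR_s are strictly increasing in q on [1-p,1],
while U_r, FPR_r, FNR_r and FNR_s are strictly decreasing in q on [1-p,1]. -/
theorem monotonicity_in_grade_accuracy (p q q' : ℝ) (hp0 : 0 < p) (hp : p < 1/2)
    (hq'1 : 1 - p ≤ q') (hq' : q' < q) (hq2 : q ≤ 1) :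
    U_s p q' < U_s p q ∧ FPR_s p q' < FPR_s p q ∧
    U_r p q < U_r p q' ∧ FPR_r p q < FPR_r p q' ∧
    FNR_r p q < FNR_r p q' ∧ FNR_s p q < FNR_s p q' :=
  monotonicity_in_grade_accuracy_general p q q' hp0 hp hq'1 hq'
end

section
/- Let p and q be real numbers with 0 < p < 1/2 and 1 - p ≤ q ≤ 1. Then the revealing school's utility is maximized at q = 1 - p, i.e., U_r(p,q) ≤ U_r(p, 1-p) = 2·p·(1-p), and the impact on its utility of moving from noisy grades to accurate grades is bounded by 1/(2·(1-p)) ≤ U_r(p,1)/U_r(p,q) ≤ 1, where U_r(p,1) = p. -/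
lemma U_r_eq_affine (p q : ℝ) : U_r p q = (1 - p) - (1 - 2 * p) * q := by
  unfold U_r; ring

lemma U_r_one (p : ℝ) : U_r p 1 = p := by
  simp [U_r]

lemma U_r_one_sub (p : ℝ) : U_r p (1 - p) = 2 * p * (1 - p) := by
  unfold U_r; ring

lemma U_r_antitone {p : ℝ} (hp : p ≤ 1 / 2) : Antitone (U_r p) := by
  intro a b hab
  have hslope : 0 ≤ 1 - 2 * p := by linarith
  rw [U_r_eq_affine, U_r_eq_affine]
  gcongr

/-- A revealing school's utility is maximized at q = 1-p, where it equals
2p(1-p); moreover 1/(2(1-p)) ≤ U_r(p,1)/U_r(p,q) ≤ 1 and U_r(p,1) = p. -/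
theorem revealing_accuracy_impact (p q : ℝ) (hp0 : 0 < p) (hp : p < 1/2)
    (hq1 : 1 - p ≤ q) (hq2 : q ≤ 1) :
    U_r p q ≤ U_r p (1 - p) ∧ U_r p (1 - p) = 2 * p * (1 - p) ∧
    1 / (2 * (1 - p)) ≤ U_r p 1 / U_r p q ∧ U_r p 1 / U_r p q ≤ 1 ∧
    U_r p 1 = p := by
  have hmax : U_r p q ≤ U_r p (1 - p) := U_r_antitone hp.le hq1
  have hmin : U_r p 1 ≤ U_r p q := U_r_antitone hp.le hq2
  have hpos : 0 < U_r p 1 := (U_r_one p).symm ▸ hp0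
  refine ⟨hmax, U_r_one_sub p, ?_, div_le_one_of_le₀ hmin (hpos.le.trans hmin), U_r_one p⟩
  calc 1 / (2 * (1 - p)) = U_r p 1 / U_r p (1 - p) := by
        rw [U_r_one, U_r_one_sub]
        field_simp
    _ ≤ U_r p 1 / U_r p q := div_le_div_of_nonneg_left hpos.le (hpos.trans_le hmin) hmax
end
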